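/- arXiv:2409.04797 — 5 statements merged into one kernel-verified Lean document; each statement's English description precedes it below -/
import Mathlib

section
/- Let n ≥ 1, and suppose u : ℝⁿ → ℝ is a C¹ function with compact support and f : ℝ → ℝ is continuous with f(0)=0, with primitive F(t) = ∫₀ᵗ f(τ)dτ. Then ∫_{ℝⁿ} f(u(x)) (x·∇u(x)) dx = -n ∫_{ℝⁿ} F(u(x)) dx. -/
open MeasureTheory
open scoped BigOperators

/-- for `u ∈ C¹_c(ℝⁿ)` and continuous `f` with `f(0) = 0` and primitive
`F(t) = ∫₀ᵗ f`, one has `∫ f(u) (x·∇u) dx = -n ∫ F(u) dx`. -/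
theorem stmt_6 (n : ℕ) (hn : 1 ≤ n) (u : EuclideanSpace ℝ (Fin n) → ℝ)
    (hu : ContDiff ℝ 1 u) (hsupp : HasCompactSupport u)
    (f : ℝ → ℝ) (hf : Continuous f) (hf0 : f 0 = 0)
    (F : ℝ → ℝ) (hF : ∀ t, F t = ∫ τ in (0 : ℝ)..t, f τ) :
    (∫ x : EuclideanSpace ℝ (Fin n),
        f (u x) * ∑ j : Fin n, x j * fderiv ℝ u x (EuclideanSpace.single j 1)) =
      -(n : ℝ) * ∫ x : EuclideanSpace ℝ (Fin n), F (u x) := by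
  -- derivative of F is f
  have hF' : ∀ t, HasDerivAt F (f t) t := by
    intro t
    have h : HasDerivAt (fun s => ∫ τ in (0:ℝ)..s, f τ) (f t) t :=
      intervalIntegral.integral_hasDerivAt_right (hf.intervalIntegrable _ _)
        (hf.stronglyMeasurableAtFilter _ _) hf.continuousAt
    have : F = fun s => ∫ τ in (0:ℝ)..s, f τ := funext hF
    rw [this]; exact h
  have hFc : Continuous F :=
    continuous_iff_continuousAt.2 fun t => (hF' t).differentiableAt.continuousAt
  -- the composite v = F ∘ u
  set v : EuclideanSpace ℝ (Fin n) → ℝ := fun x => F (u x) with hv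
  have hF0 : F 0 = 0 := by rw [hF]; simp
  have hvsupp : HasCompactSupport v := hsupp.comp_left hF0
  have hudiff : Differentiable ℝ u := hu.differentiable one_ne_zero
  have hvderiv : ∀ x, HasFDerivAt v (f (u x) • fderiv ℝ u x) x := fun x =>
    (hF' (u x)).comp_hasFDerivAt x (hudiff x).hasFDerivAt
  have hvdiff : Differentiable ℝ v := fun x => (hvderiv x).differentiableAt
  have hvfderiv : ∀ x, fderiv ℝ v x = f (u x) • fderiv ℝ u x := fun x =>
    (hvderiv x).fderiv
  have hvc : Continuous v := hFc.comp hu.continuous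
  -- continuity of the derivative of u
  have hu'c : Continuous (fderiv ℝ u) := ((hu.fderiv_right (m := 0) (by norm_num)).continuous)
  -- integrability facts
  have hvint : Integrable v := hvc.integrable_of_hasCompactSupport hvsupp
  -- the key per-coordinate identity
  have key : ∀ j : Fin n,
      (∫ x : EuclideanSpace ℝ (Fin n),
          x j * fderiv ℝ v x (EuclideanSpace.single j 1)) = -∫ x, v x := by
    intro j
    have hpdiff : Differentiable ℝ (fun x : EuclideanSpace ℝ (Fin n) => x j) :=
      (EuclideanSpace.proj (𝕜 := ℝ) j).differentiable
    have hpfd : ∀ x : EuclideanSpace ℝ (Fin n),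
        fderiv ℝ (fun y : EuclideanSpace ℝ (Fin n) => y j) x
          = (EuclideanSpace.proj (𝕜 := ℝ) j : EuclideanSpace ℝ (Fin n) →L[ℝ] ℝ) := by
      intro x
      exact (EuclideanSpace.proj (𝕜 := ℝ) j).fderiv
    have hps : ∀ x : EuclideanSpace ℝ (Fin n),
        fderiv ℝ (fun y : EuclideanSpace ℝ (Fin n) => y j) x (EuclideanSpace.single j 1)
          = 1 := by
      intro x; rw [hpfd x]; simp
    have hv'c : Continuous fun x : EuclideanSpace ℝ (Fin n) =>
        fderiv ℝ v x (EuclideanSpace.single j 1) := by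
      have : Continuous fun x : EuclideanSpace ℝ (Fin n) =>
          f (u x) * fderiv ℝ u x (EuclideanSpace.single j 1) :=
        (hf.comp hu.continuous).mul
          ((ContinuousLinearMap.apply ℝ ℝ (EuclideanSpace.single j 1)).continuous.comp hu'c)
      convert this using 1
      ext x; rw [hvfderiv x]; simp
    have hv'supp : HasCompactSupport fun x : EuclideanSpace ℝ (Fin n) =>
        fderiv ℝ v x (EuclideanSpace.single j 1) := by
      apply HasCompactSupport.intro hvsupp.isCompact
      intro x hx
      have hx0 : v x = 0 := image_eq_zero_of_notMem_tsupport hx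
      have : fderiv ℝ v x = 0 := by
        have := hvsupp.fderiv (𝕜 := ℝ)
        exact image_eq_zero_of_notMem_tsupport (by
          intro hmem
          exact hx (tsupport_fderiv_subset ℝ hmem))
      simp [this]
    have hcont : Continuous fun x : EuclideanSpace ℝ (Fin n) => x j :=
      (EuclideanSpace.proj (𝕜 := ℝ) j).continuous
    have h1 : Integrable fun x : EuclideanSpace ℝ (Fin n) =>
        fderiv ℝ (fun y : EuclideanSpace ℝ (Fin n) => y j) x (EuclideanSpace.single j 1)
          * v x := by
      simp only [hps]
      simpa using hvint
    have h2 : Integrable fun x : EuclideanSpace ℝ (Fin n) =>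
        x j * fderiv ℝ v x (EuclideanSpace.single j 1) :=
      (hcont.mul hv'c).integrable_of_hasCompactSupport (hv'supp.mul_left)
    have h3 : Integrable fun x : EuclideanSpace ℝ (Fin n) => x j * v x :=
      (hcont.mul hvc).integrable_of_hasCompactSupport (hvsupp.mul_left)
    have := integral_mul_fderiv_eq_neg_fderiv_mul_of_integrable h1 h2 h3 (fun x _ => hpdiff x) (fun x _ => hvdiff x)
    rw [this]
    congr 1
    apply integral_congr_ae
    filter_upwards with x
    rw [hps x, one_mul]
  -- now assemble
  have hsum : ∀ x : EuclideanSpace ℝ (Fin n),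
      f (u x) * ∑ j : Fin n, x j * fderiv ℝ u x (EuclideanSpace.single j 1)
        = ∑ j : Fin n, x j * fderiv ℝ v x (EuclideanSpace.single j 1) := by
    intro x
    rw [Finset.mul_sum]
    apply Finset.sum_congr rfl
    intro j _
    rw [hvfderiv x]
    simp
    ring
  calc (∫ x : EuclideanSpace ℝ (Fin n),
        f (u x) * ∑ j : Fin n, x j * fderiv ℝ u x (EuclideanSpace.single j 1))
      = ∫ x : EuclideanSpace ℝ (Fin n),
          ∑ j : Fin n, x j * fderiv ℝ v x (EuclideanSpace.single j 1) := by
        apply integral_congr_ae; filter_upwards with x; exact hsum x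
    _ = ∑ j : Fin n, ∫ x : EuclideanSpace ℝ (Fin n),
          x j * fderiv ℝ v x (EuclideanSpace.single j 1) := by
        apply integral_finset_sum
        intro j _
        have hv'c : Continuous fun x : EuclideanSpace ℝ (Fin n) =>
            fderiv ℝ v x (EuclideanSpace.single j 1) := by
          have : Continuous fun x : EuclideanSpace ℝ (Fin n) =>
              f (u x) * fderiv ℝ u x (EuclideanSpace.single j 1) :=
            (hf.comp hu.continuous).mul
              ((ContinuousLinearMap.apply ℝ ℝ (EuclideanSpace.single j 1)).continuous.comp hu'c)
          convert this using 1
          ext x; rw [hvfderiv x]; simp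
        have hv'supp : HasCompactSupport fun x : EuclideanSpace ℝ (Fin n) =>
            fderiv ℝ v x (EuclideanSpace.single j 1) := by
          apply HasCompactSupport.intro hvsupp.isCompact
          intro x hx
          have : fderiv ℝ v x = 0 :=
            image_eq_zero_of_notMem_tsupport (by
              intro hmem
              exact hx (tsupport_fderiv_subset ℝ hmem))
          simp [this]
        exact (((EuclideanSpace.proj (𝕜 := ℝ) j).continuous).mul
          hv'c).integrable_of_hasCompactSupport (hv'supp.mul_left)
    _ = ∑ j : Fin n, -∫ x, v x := by
        apply Finset.sum_congr rfl; intro j _; exact key j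
    _ = -(n : ℝ) * ∫ x : EuclideanSpace ℝ (Fin n), F (u x) := by
        simp [Finset.sum_const]
        exact Or.inl rfl
end

section
/- Let n ≥ 1, u ∈ L²(ℝⁿ) ∩ 𝒮(ℝⁿ) (Schwartz) satisfy the Fourier-side equation (2 ln|ξ|)û(ξ) = 𝓕(g)(ξ) where g = (4/n) u ln u - T u for some T ∈ ℝ, and define u_l(x) = l^{-n/2}u(x/l) for l > 0. Then u_l satisfies (2 ln|ξ|)û_l(ξ) = 𝓕((4/n) u_l ln u_l - T u_l)(ξ). That is, the equation 𝓛_Δ u + T u = (4/n) u ln u is invariant under the mass-preserving scaling u ↦ u_l. -/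
/-!
Write `c = l^{-n/2}`. Dilation acts on the Fourier side by `𝓕(f(l⁻¹ •))(ξ) = lⁿ 𝓕f(l • ξ)`, and
`ln (c t) = ln t - (n/2) ln l` turns the nonlinearity of `u_l` into `c` times the dilated
nonlinearity of `u` minus `2 ln l · u_l`. This extra term is absorbed by
`ln ‖l • ξ‖ = ln l + ln ‖ξ‖`.
At `ξ = 0`, where `Real.log 0 = 0`, one needs `û(0) = 0` instead: it follows from the equation
itself, because `û` is continuous while `2 ln ‖ξ‖ · û(ξ) = ĝ(ξ)` stays bounded by `‖g‖₁` as
`ln ‖ξ‖ → -∞`. Linearity of `𝓕` needs `u ln u` to be integrable, which holds since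
`|t ln t| ≲ √|t|` on bounded sets.
-/

open MeasureTheory Filter Topology Module
open scoped FourierTransform RealInnerProductSpace

namespace Real

theorem abs_mul_log_le_mul_sqrt {M t : ℝ} (hM : 1 ≤ M) (ht : |t| ≤ M) :
    |t * log t| ≤ max 2 (√M * log M) * √|t| := by
  rw [abs_mul, ← log_abs]
  set s := |t|
  have hs : 0 ≤ s := abs_nonneg t
  rcases hs.eq_or_lt with hs0 | hs0
  · simp [← hs0]
  rcases le_or_gt s 1 with hs1 | hs1
  · have hsmall := abs_log_mul_self_rpow_lt s (1 / 2) hs0 hs1 one_half_pos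
    rw [← sqrt_eq_rpow, one_div_one_div] at hsmall
    calc s * |log s| = √s * |log s * √s| := by
          rw [abs_mul, abs_of_nonneg (sqrt_nonneg s)]
          nth_rewrite 1 [← mul_self_sqrt hs]
          ring
      _ ≤ √s * 2 := by gcongr
      _ ≤ max 2 (√M * log M) * √s := by
          rw [mul_comm]; gcongr; exact le_max_left _ _
  · have hlog : 0 ≤ log s := log_nonneg hs1.le
    calc s * |log s| = √s * √s * log s := by rw [mul_self_sqrt hs, abs_of_nonneg hlog]
      _ ≤ √M * √s * log M := by gcongr
      _ = √M * log M * √s := by ring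
      _ ≤ max 2 (√M * log M) * √s := by gcongr; exact le_max_right _ _

theorem mul_log_rpow_neg_half_mul {d l : ℝ} (hd : d ≠ 0) (hl : 0 < l) (T t : ℝ) :
    4 / d * (l ^ (-d / 2) * t) * log (l ^ (-d / 2) * t) - T * (l ^ (-d / 2) * t) =
      l ^ (-d / 2) * (4 / d * t * log t - T * t - 2 * log l * t) := by
  rcases eq_or_ne t 0 with rfl | ht
  · simp
  rw [log_mul (rpow_pos_of_pos hl _).ne' ht, log_rpow hl]
  field_simp
  ring

end Real

namespace SchwartzMap

variable {E : Type*} [NormedAddCommGroup E] [NormedSpace ℝ E] [MeasurableSpace E] [BorelSpace E]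

theorem integrable_mul_log (u : 𝓢(E, ℝ)) (μ : Measure E := by volume_tac)
    [μ.HasTemperateGrowth] : Integrable (fun x => u x * Real.log (u x)) μ := by
  set M := max 1 (SchwartzMap.seminorm ℝ 0 0 u)
  have hbound : ∀ x, |u x| ≤ M := fun x =>
    (u.norm_le_seminorm ℝ x).trans (le_max_right _ _)
  -- `|u| ^ (1/2)` is integrable because Schwartz functions lie in every `L^p`, even for `p < 1`
  have hsqrt : Integrable (fun x => √|u x|) μ := by
    have := (u.memLp (1 / 2) μ).integrable_norm_rpow (by norm_num) (by norm_num)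
    simpa [Real.sqrt_eq_rpow] using this
  refine (hsqrt.const_mul (max 2 (√M * Real.log M))).mono' ?_ (ae_of_all _ fun x => ?_)
  · exact (u.continuous.measurable.mul
      (Real.measurable_log.comp u.continuous.measurable)).aestronglyMeasurable
  · exact Real.abs_mul_log_le_mul_sqrt (le_max_left _ _) (hbound x)

end SchwartzMap

theorem ContinuousAt.eq_zero_of_norm_mul_le_of_tendsto_atTop {X 𝕜 : Type*} [TopologicalSpace X]
    [NormedField 𝕜] {a : X} [(𝓝[≠] a).NeBot] {φ w : X → 𝕜} (hφ : ContinuousAt φ a)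
    (hw : Tendsto (fun x => ‖w x‖) (𝓝[≠] a) atTop) {C : ℝ}
    (hC : ∀ x, ‖w x * φ x‖ ≤ C) : φ a = 0 := by
  have hbound : ∀ᶠ x in 𝓝[≠] a, ‖φ x‖ ≤ C / ‖w x‖ := by
    filter_upwards [hw.eventually_gt_atTop 0] with x hx
    rw [le_div_iff₀ hx, mul_comm, ← norm_mul]
    exact hC x
  have hlim : Tendsto φ (𝓝[≠] a) (𝓝 0) :=
    tendsto_zero_iff_norm_tendsto_zero.2 <|
      squeeze_zero' (Eventually.of_forall fun _ => norm_nonneg _) hbound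
        (tendsto_const_nhds.div_atTop hw)
  exact tendsto_nhds_unique (hφ.tendsto.mono_left nhdsWithin_le_nhds) hlim

theorem tendsto_norm_two_mul_log_norm_atTop {E : Type*} [NormedAddCommGroup E] :
    Tendsto (fun ξ : E => ‖((2 * Real.log ‖ξ‖ : ℝ) : ℂ)‖) (𝓝[≠] 0) atTop := by
  simp only [Complex.norm_real, Real.norm_eq_abs]
  exact tendsto_abs_atBot_atTop.comp <|
    (Real.tendsto_log_nhdsGT_zero.comp tendsto_norm_nhdsNE_zero).const_mul_atBot two_pos

namespace Real

variable {V : Type*} [NormedAddCommGroup V] [InnerProductSpace ℝ V] [FiniteDimensional ℝ V]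
  [MeasurableSpace V] [BorelSpace V]

theorem fourier_const_mul (f : V → ℂ) (a : ℂ) (ξ : V) :
    𝓕 (fun x => a * f x) ξ = a * 𝓕 f ξ :=
  congrFun (VectorFourier.fourierIntegral_const_smul _ _ _ f a) ξ

theorem fourier_sub {f g : V → ℂ} (hf : Integrable f) (hg : Integrable g) (ξ : V) :
    𝓕 (fun x => f x - g x) ξ = 𝓕 f ξ - 𝓕 g ξ := by
  simp only [fourier_eq, smul_sub]
  exact integral_sub ((fourierIntegral_convergent_iff ξ).2 hf)
    ((fourierIntegral_convergent_iff ξ).2 hg)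

theorem fourier_comp_inv_smul {E : Type*} [NormedAddCommGroup E] [NormedSpace ℂ E] (f : V → E)
    {l : ℝ} (hl : 0 < l) (ξ : V) :
    𝓕 (fun x => f (l⁻¹ • x)) ξ = l ^ finrank ℝ V • 𝓕 f (l • ξ) := by
  simp only [fourier_eq]
  rw [← Measure.integral_comp_inv_smul_of_nonneg volume _ hl.le]
  congr 1 with x
  rw [inner_smul_left, inner_smul_right, conj_trivial, ← mul_assoc, inv_mul_cancel₀ hl.ne', one_mul]

theorem fourier_apply_zero_eq_zero_of_log_mul_fourier_eq [Nontrivial V] {f g : V → ℂ}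
    (hf : Integrable f) (h : ∀ ξ : V, ((2 * log ‖ξ‖ : ℝ) : ℂ) * 𝓕 f ξ = 𝓕 g ξ) : 𝓕 f 0 = 0 := by
  have hcont : Continuous (𝓕 f) :=
    VectorFourier.fourierIntegral_continuous continuous_fourierChar continuous_inner hf
  refine hcont.continuousAt.eq_zero_of_norm_mul_le_of_tendsto_atTop
    tendsto_norm_two_mul_log_norm_atTop (C := ∫ x, ‖g x‖) fun ξ => ?_
  rw [h ξ]
  exact VectorFourier.norm_fourierIntegral_le_integral_norm _ _ _ _ _

end Real

/-- if a Schwartz function `u` satisfies, on the Fourier side,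
`(2 ln|ξ|)û(ξ) = 𝓕((4/n)u ln u - T u)(ξ)` for all `ξ`, then for every `l > 0` the
mass-preserving rescaling `u_l(x) = l^{-n/2}u(x/l)` satisfies the same equation:
the equation `𝓛_Δ u + T u = (4/n) u ln u` is scaling invariant. -/
theorem stmt_12 (n : ℕ) (hn : 1 ≤ n) (T : ℝ)
    (u : SchwartzMap (EuclideanSpace ℝ (Fin n)) ℝ)
    (heq : ∀ ξ : EuclideanSpace ℝ (Fin n),
      ((2 * Real.log ‖ξ‖ : ℝ) : ℂ) *
          𝓕 (fun x => ((u x : ℝ) : ℂ)) ξ =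
        𝓕
          (fun x => ((4 / (n : ℝ) * u x * Real.log (u x) - T * u x : ℝ) : ℂ)) ξ)
    (l : ℝ) (hl : 0 < l) :
    ∀ ξ : EuclideanSpace ℝ (Fin n),
      ((2 * Real.log ‖ξ‖ : ℝ) : ℂ) *
          𝓕
            (fun x => ((l ^ (-(n : ℝ) / 2) * u (l⁻¹ • x) : ℝ) : ℂ)) ξ =
        𝓕
          (fun x => ((4 / (n : ℝ) * (l ^ (-(n : ℝ) / 2) * u (l⁻¹ • x)) *
              Real.log (l ^ (-(n : ℝ) / 2) * u (l⁻¹ • x)) -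
            T * (l ^ (-(n : ℝ) / 2) * u (l⁻¹ • x)) : ℝ) : ℂ)) ξ := by
  intro ξ
  have : Nonempty (Fin n) := ⟨⟨0, hn⟩⟩
  set c := l ^ (-(n : ℝ) / 2)
  set uC : EuclideanSpace ℝ (Fin n) → ℂ := fun x => ((u x : ℝ) : ℂ)
  set gC : EuclideanSpace ℝ (Fin n) → ℂ :=
    fun x => ((4 / (n : ℝ) * u x * Real.log (u x) - T * u x : ℝ) : ℂ)
  have hu : Integrable uC := u.integrable.ofReal
  have hg : Integrable gC := by
    have := (((u.integrable_mul_log).const_mul (4 / (n : ℝ))).sub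
      (u.integrable.const_mul T)).ofReal (𝕜 := ℂ)
    refine this.congr (ae_of_all _ fun x => ?_)
    simp [gC, mul_assoc]
  have hu0 : 𝓕 uC 0 = 0 := Real.fourier_apply_zero_eq_zero_of_log_mul_fourier_eq hu heq
  have hlhs : (fun x => ((c * u (l⁻¹ • x) : ℝ) : ℂ)) = fun x => c * uC (l⁻¹ • x) := by
    ext x; push_cast; rfl
  have hrhs : (fun x => ((4 / (n : ℝ) * (c * u (l⁻¹ • x)) * Real.log (c * u (l⁻¹ • x)) -
      T * (c * u (l⁻¹ • x)) : ℝ) : ℂ)) =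
      fun x => c * (fun y => gC y - ((2 * Real.log l : ℝ) : ℂ) * uC y) (l⁻¹ • x) := by
    ext x
    rw [Real.mul_log_rpow_neg_half_mul (by positivity) hl]
    simp only [gC, uC]
    push_cast
    ring
  rw [hlhs, hrhs, Real.fourier_const_mul, Real.fourier_const_mul, Real.fourier_comp_inv_smul _ hl,
    Real.fourier_comp_inv_smul (fun y => gC y - ((2 * Real.log l : ℝ) : ℂ) * uC y) hl,
    Real.fourier_sub hg (hu.const_mul _),
    Real.fourier_const_mul, ← heq]
  rcases eq_or_ne ξ 0 with rfl | hξ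
  · simp [hu0]
  · rw [norm_smul, Real.norm_of_nonneg hl.le, Real.log_mul hl.ne' (norm_ne_zero_iff.2 hξ)]
    simp only [Complex.real_smul]
    push_cast
    ring
end

section
/- Let n ≥ 1 and u₀(ι) = β(1+ι²)^{-n/2} for ι ∈ ℝ, with β > 0. Fix ι₀ > 0 and let s = √(1+ι₀²). Then for all ι ≠ 0, u₀(s ι + ι₀) = |ι|^{-n} u₀(s ι^{-1} + ι₀). -/
/-- with `u₀(ι) = β(1+ι²)^{-n/2}`, `ι₀ > 0` and `s = √(1+ι₀²)`, one has
`u₀(sι + ι₀) = |ι|^{-n} u₀(s/ι + ι₀)` for every `ι ≠ 0`. -/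
theorem stmt_15 (n : ℕ) (hn : 1 ≤ n) (β : ℝ) (hβ : 0 < β)
    (ι₀ : ℝ) (hι₀ : 0 < ι₀) (s : ℝ) (hs : s = Real.sqrt (1 + ι₀ ^ 2))
    (ι : ℝ) (hι : ι ≠ 0) :
    β * (1 + (s * ι + ι₀) ^ 2) ^ (-(n : ℝ) / 2) =
      |ι| ^ (-(n : ℝ)) * (β * (1 + (s / ι + ι₀) ^ 2) ^ (-(n : ℝ) / 2)) := by
  have h1 : (0:ℝ) < 1 + ι₀ ^ 2 := by positivity
  have hs2 : s ^ 2 = 1 + ι₀ ^ 2 := by rw [hs, Real.sq_sqrt h1.le]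
  have hA : (0:ℝ) ≤ 1 + (s / ι + ι₀) ^ 2 := by positivity
  have key : 1 + (s * ι + ι₀) ^ 2 = ι ^ 2 * (1 + (s / ι + ι₀) ^ 2) := by
    field_simp
    nlinarith [hs2]
  rw [key, Real.mul_rpow (by positivity) hA]
  have h2 : (ι ^ 2 : ℝ) ^ (-(n:ℝ) / 2) = |ι| ^ (-(n : ℝ)) := by
    rw [← sq_abs, ← Real.rpow_natCast |ι| 2, ← Real.rpow_mul (abs_nonneg ι)]
    congr 1; ring
  rw [h2]; ring
end

section
/- Let n ≥ 1 and c_{n,s} = 2^{2s} π^{-n/2} s Γ((n+2s)/2)/Γ(1-s) for s ∈ (0,1). Then d_n(s) := c_{n,s}/s satisfies d_n(0⁺) = π^{-n/2}Γ(n/2) and lim_{s→0⁺} (d_n(s) - π^{-n/2}Γ(n/2))/s = π^{-n/2}((2 ln 2 - γ)Γ(n/2) + Γ'(n/2)), where γ is the Euler–Mascheroni constant. -/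
open Real Filter

theorem aux_hasDerivAt (n : ℕ) (hn : 1 ≤ n) :
    HasDerivAt (fun s : ℝ =>
        (2 : ℝ) ^ (2 * s) * Real.pi ^ (-(n : ℝ) / 2) *
          Real.Gamma ((n : ℝ) / 2 + s) / Real.Gamma (1 - s))
      (Real.pi ^ (-(n : ℝ) / 2) *
        ((2 * Real.log 2 - (-(deriv Real.Gamma 1))) * Real.Gamma ((n : ℝ) / 2) +
          deriv Real.Gamma ((n : ℝ) / 2))) 0 := by
  have hn1 : (1:ℝ) ≤ n := by exact_mod_cast hn
  have hnpos : (0:ℝ) < (n:ℝ)/2 := by linarith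
  have hΓn : DifferentiableAt ℝ Real.Gamma ((n:ℝ)/2) := by
    apply Real.differentiableAt_Gamma
    intro m h
    have : -(m:ℝ) ≤ 0 := neg_nonpos.mpr (Nat.cast_nonneg m)
    linarith [h ▸ hnpos]
  have hΓ1 : DifferentiableAt ℝ Real.Gamma (1:ℝ) := by
    apply Real.differentiableAt_Gamma
    intro m h
    have : -(m:ℝ) ≤ 0 := neg_nonpos.mpr (Nat.cast_nonneg m)
    linarith
  have h1 : HasDerivAt (fun s : ℝ => (2:ℝ) ^ (2 * s)) (2 * Real.log 2) 0 := by
    have := ((Real.hasStrictDerivAt_const_rpow (by norm_num : (0:ℝ) < 2)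
      (2 * (0:ℝ))).hasDerivAt.comp 0 ((hasDerivAt_id (0:ℝ)).const_mul 2))
    simp only [Function.comp_def, mul_zero, Real.rpow_zero, one_mul, id_eq, mul_one] at this
    convert this using 1
    · rfl
    · rfl
    · ring
  have h2 : HasDerivAt (fun s : ℝ => Real.Gamma ((n:ℝ)/2 + s))
      (deriv Real.Gamma ((n:ℝ)/2)) 0 := by
    have := (show HasDerivAt Real.Gamma (deriv Real.Gamma ((n:ℝ)/2)) ((n:ℝ)/2 + id (0:ℝ)) by simpa using hΓn.hasDerivAt).comp 0 ((hasDerivAt_id (0:ℝ)).const_add ((n:ℝ)/2))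
    simpa [Function.comp_def] using this
  have h3 : HasDerivAt (fun s : ℝ => Real.Gamma (1 - s)) (-(deriv Real.Gamma 1)) 0 := by
    have := (show HasDerivAt Real.Gamma (deriv Real.Gamma 1) (1 - id (0:ℝ)) by simpa using hΓ1.hasDerivAt).comp 0 ((hasDerivAt_id (0:ℝ)).const_sub 1)
    simpa [Function.comp_def] using this
  have hne : Real.Gamma (1 - 0) ≠ 0 := by
    simp [Real.Gamma_one]
  have := ((h1.mul_const (Real.pi ^ (-(n : ℝ) / 2))).mul h2).div h3 hne
  convert this using 1
  · rfl
  · rfl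
  · rfl
  simp only [Pi.mul_apply, mul_zero, Real.rpow_zero, sub_zero, add_zero, Real.Gamma_one]
  ring

/-- with `c_{n,s} = 2^{2s}π^{-n/2} s Γ(n/2+s)/Γ(1-s)` and
`d_n(s) = c_{n,s}/s`, one has `d_n(s) → π^{-n/2}Γ(n/2)` and
`(d_n(s) - π^{-n/2}Γ(n/2))/s → π^{-n/2}((2 ln 2 - γ)Γ(n/2) + Γ'(n/2))` as `s → 0⁺`,
where `γ = -Γ'(1)` is the Euler–Mascheroni constant. -/
theorem stmt_18 (n : ℕ) (hn : 1 ≤ n) :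
    Tendsto (fun s : ℝ =>
        (2 : ℝ) ^ (2 * s) * Real.pi ^ (-(n : ℝ) / 2) *
          Real.Gamma ((n : ℝ) / 2 + s) / Real.Gamma (1 - s))
      (nhdsWithin 0 (Set.Ioi (0 : ℝ)))
      (nhds (Real.pi ^ (-(n : ℝ) / 2) * Real.Gamma ((n : ℝ) / 2))) ∧
    Tendsto (fun s : ℝ =>
        ((2 : ℝ) ^ (2 * s) * Real.pi ^ (-(n : ℝ) / 2) *
            Real.Gamma ((n : ℝ) / 2 + s) / Real.Gamma (1 - s) -
          Real.pi ^ (-(n : ℝ) / 2) * Real.Gamma ((n : ℝ) / 2)) / s)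
      (nhdsWithin 0 (Set.Ioi (0 : ℝ)))
      (nhds (Real.pi ^ (-(n : ℝ) / 2) *
        ((2 * Real.log 2 - (-(deriv Real.Gamma 1))) * Real.Gamma ((n : ℝ) / 2) +
          deriv Real.Gamma ((n : ℝ) / 2)))) := by
  have hD := aux_hasDerivAt n hn
  have hf0 : (2 : ℝ) ^ (2 * (0:ℝ)) * Real.pi ^ (-(n : ℝ) / 2) *
      Real.Gamma ((n : ℝ) / 2 + 0) / Real.Gamma (1 - 0) =
      Real.pi ^ (-(n : ℝ) / 2) * Real.Gamma ((n : ℝ) / 2) := by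
    simp [Real.Gamma_one]
  constructor
  · have := hD.continuousAt.continuousWithinAt (s := Set.Ioi (0:ℝ))
    rw [ContinuousWithinAt, hf0] at this
    exact this
  · have hslope := hasDerivAt_iff_tendsto_slope.mp hD
    have hmono : nhdsWithin (0:ℝ) (Set.Ioi 0) ≤ nhdsWithin 0 {(0:ℝ)}ᶜ := by
      apply nhdsWithin_mono
      intro x hx
      exact ne_of_gt hx
    refine (hslope.mono_left hmono).congr' ?_
    filter_upwards [self_mem_nhdsWithin] with s hs
    rw [slope_def_field, hf0]
    rw [sub_zero]
end

section
/- For n ≥ 1 and s ∈ (0, 1/2), c_{n,s} ∫_{ℝⁿ∖B₁(0)} |z|^{-n-2s} dz = (c_{n,s}/s)·(ω_{n-1}/2) = 2^{2s} Γ(n/2+s)/(Γ(n/2)Γ(1-s)), and this quantity tends to 1 as s → 0⁺. -/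
open Real Filter MeasureTheory

lemma aux_radial_integral (n : ℕ) (hn : 1 ≤ n) (s : ℝ) (hs : 0 < s) :
    (∫ y in Set.Ioi (0:ℝ), y ^ (n-1) •
        Set.indicator (Set.Ici (1:ℝ)) (fun y => y ^ (-(n : ℝ) - 2 * s)) y)
    = 1 / (2 * s) := by
  have h1 : ∀ y : ℝ, y ^ (n-1) • Set.indicator (Set.Ici (1:ℝ)) (fun y => y ^ (-(n : ℝ) - 2 * s)) y
      = Set.indicator (Set.Ici (1:ℝ)) (fun y => y ^ (n-1) * y ^ (-(n : ℝ) - 2 * s)) y := by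
    intro y
    by_cases hy : y ∈ Set.Ici (1:ℝ) <;> simp [Set.indicator_apply, hy]
  simp_rw [h1]
  rw [MeasureTheory.setIntegral_indicator measurableSet_Ici]
  have h2 : Set.Ioi (0:ℝ) ∩ Set.Ici 1 = Set.Ici 1 := by
    ext y; simp; intro h; linarith
  rw [h2, MeasureTheory.integral_Ici_eq_integral_Ioi,
    MeasureTheory.setIntegral_congr_fun measurableSet_Ioi
      (g := fun y : ℝ => y ^ (-1 - 2 * s)) ?_]
  · rw [integral_Ioi_rpow_of_lt (by linarith) one_pos]
    rw [Real.one_rpow]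
    have h3 : -1 - 2*s + 1 = -(2*s) := by ring
    rw [h3, neg_div_neg_eq]
  · intro y hy
    have hy0 : (0:ℝ) < y := lt_trans one_pos hy
    simp only
    rw [← Real.rpow_natCast y (n-1), ← Real.rpow_add hy0]
    congr 1
    have : ((n-1 : ℕ) : ℝ) = (n : ℝ) - 1 := by
      have := Nat.cast_sub hn (R := ℝ); simpa using this
    rw [this]; ring

lemma aux_integral (n : ℕ) (hn : 1 ≤ n) (s : ℝ) (hs : 0 < s) :
    (∫ z in (Metric.ball (0 : EuclideanSpace ℝ (Fin n)) 1)ᶜ,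
      ‖z‖ ^ (-(n : ℝ) - 2 * s)) =
    (n * (Real.sqrt π ^ n / Real.Gamma (n / 2 + 1))) * (1 / (2 * s)) := by
  haveI : Nonempty (Fin n) := ⟨⟨0, hn⟩⟩
  haveI : Nontrivial (EuclideanSpace ℝ (Fin n)) := by
    have : 0 < Module.finrank ℝ (EuclideanSpace ℝ (Fin n)) := by
      simp [finrank_euclideanSpace]; omega
    exact Module.nontrivial_of_finrank_pos this
  have hdim : Module.finrank ℝ (EuclideanSpace ℝ (Fin n)) = n := by
    simp [finrank_euclideanSpace]
  have key := MeasureTheory.integral_fun_norm_addHaar (volume : Measure (EuclideanSpace ℝ (Fin n)))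
    (Set.indicator (Set.Ici (1:ℝ)) (fun y => y ^ (-(n : ℝ) - 2 * s)))
  rw [hdim] at key
  have hl : (∫ x : EuclideanSpace ℝ (Fin n),
      Set.indicator (Set.Ici (1:ℝ)) (fun y => y ^ (-(n : ℝ) - 2 * s)) ‖x‖) =
      ∫ z in (Metric.ball (0 : EuclideanSpace ℝ (Fin n)) 1)ᶜ, ‖z‖ ^ (-(n : ℝ) - 2 * s) := by
    rw [← MeasureTheory.integral_indicator (by measurability)]
    congr 1
    ext x
    have : x ∈ (Metric.ball (0 : EuclideanSpace ℝ (Fin n)) 1)ᶜ ↔ ‖x‖ ∈ Set.Ici (1:ℝ) := by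
      simp [Metric.mem_ball, dist_zero_right]
    by_cases hx : ‖x‖ ∈ Set.Ici (1:ℝ) <;>
      simp [Set.indicator_apply, hx, this]
  have hvol : ((volume (Metric.ball (0 : EuclideanSpace ℝ (Fin n)) 1)).toReal : ℝ)
      = Real.sqrt π ^ n / Real.Gamma (n / 2 + 1) := by
    rw [EuclideanSpace.volume_ball]
    simp only [Fintype.card_fin, ENNReal.ofReal_one, one_pow, one_mul]
    rw [ENNReal.toReal_ofReal]
    positivity
  rw [hl, measureReal_def, hvol] at key
  rw [key, aux_radial_integral n hn s hs]
  simp [smul_eq_mul]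
  ring

/-- with `c_{n,s} = 2^{2s}π^{-n/2} s Γ(n/2+s)/Γ(1-s)` and
`ω_{n-1} = 2π^{n/2}/Γ(n/2)`, for `s ∈ (0,1/2)` one has
`c_{n,s} ∫_{ℝⁿ∖B₁(0)} |z|^{-n-2s} dz = (c_{n,s}/s)(ω_{n-1}/2)
 = 2^{2s}Γ(n/2+s)/(Γ(n/2)Γ(1-s))`, and this quantity tends to `1` as `s → 0⁺`. -/
theorem stmt_19 (n : ℕ) (hn : 1 ≤ n) :
    (∀ s ∈ Set.Ioo (0 : ℝ) (1 / 2),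
      ((2 : ℝ) ^ (2 * s) * Real.pi ^ (-(n : ℝ) / 2) * s *
            Real.Gamma ((n : ℝ) / 2 + s) / Real.Gamma (1 - s)) *
          (∫ z in (Metric.ball (0 : EuclideanSpace ℝ (Fin n)) 1)ᶜ,
            ‖z‖ ^ (-(n : ℝ) - 2 * s)) =
        ((2 : ℝ) ^ (2 * s) * Real.pi ^ (-(n : ℝ) / 2) * s *
            Real.Gamma ((n : ℝ) / 2 + s) / Real.Gamma (1 - s)) / s *
          ((2 * Real.pi ^ ((n : ℝ) / 2) / Real.Gamma ((n : ℝ) / 2)) / 2) ∧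
      ((2 : ℝ) ^ (2 * s) * Real.pi ^ (-(n : ℝ) / 2) * s *
            Real.Gamma ((n : ℝ) / 2 + s) / Real.Gamma (1 - s)) *
          (∫ z in (Metric.ball (0 : EuclideanSpace ℝ (Fin n)) 1)ᶜ,
            ‖z‖ ^ (-(n : ℝ) - 2 * s)) =
        (2 : ℝ) ^ (2 * s) * Real.Gamma ((n : ℝ) / 2 + s) /
          (Real.Gamma ((n : ℝ) / 2) * Real.Gamma (1 - s))) ∧
    Tendsto (fun s : ℝ =>
        (2 : ℝ) ^ (2 * s) * Real.Gamma ((n : ℝ) / 2 + s) /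
          (Real.Gamma ((n : ℝ) / 2) * Real.Gamma (1 - s)))
      (nhdsWithin 0 (Set.Ioi (0 : ℝ))) (nhds 1) := by
  have hn2 : (0:ℝ) < (n:ℝ)/2 := by positivity
  have hGn : 0 < Real.Gamma ((n:ℝ)/2) := Real.Gamma_pos_of_pos hn2
  constructor
  · intro s hs
    obtain ⟨hs0, hs12⟩ := hs
    have hG1s : 0 < Real.Gamma (1 - s) := Real.Gamma_pos_of_pos (by linarith)
    have hint := aux_integral n hn s hs0
    -- rewrite √π ^ n = π ^ (n/2) and Γ(n/2+1) = (n/2)Γ(n/2)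
    have hsqrt : Real.sqrt π ^ n = Real.pi ^ ((n:ℝ)/2) := by
      rw [Real.sqrt_eq_rpow, ← Real.rpow_natCast (π ^ (1/2 : ℝ)) n,
        ← Real.rpow_mul Real.pi_pos.le]
      congr 1; ring
    have hGam : Real.Gamma ((n:ℝ)/2 + 1) = ((n:ℝ)/2) * Real.Gamma ((n:ℝ)/2) :=
      Real.Gamma_add_one hn2.ne'
    rw [hsqrt, hGam] at hint
    have hneg : Real.pi ^ (-(n : ℝ) / 2) = (Real.pi ^ ((n:ℝ)/2))⁻¹ := by
      rw [neg_div, Real.rpow_neg Real.pi_pos.le]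
    have hP : 0 < Real.pi ^ ((n:ℝ)/2) := Real.rpow_pos_of_pos Real.pi_pos _
    have hnn : (0:ℝ) < (n:ℝ) := by exact_mod_cast hn
    rw [hint, hneg]
    constructor
    · field_simp
    · field_simp
  · -- the limit
    have hc1 : ContinuousAt (fun s : ℝ => (2:ℝ) ^ (2 * s)) 0 := by
      exact (Real.continuousAt_const_rpow (by norm_num : (2:ℝ) ≠ 0)).comp
        ((continuous_const.mul continuous_id).continuousAt)
    have hc2 : ContinuousAt (fun s : ℝ => Real.Gamma ((n:ℝ)/2 + s)) 0 := by
      have hadd : ContinuousAt (fun s : ℝ => (n:ℝ)/2 + s) 0 :=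
        (continuous_const.add continuous_id).continuousAt
      have hG : ContinuousAt Real.Gamma ((fun s : ℝ => (n:ℝ)/2 + s) 0) := by
        simp only [add_zero]
        refine (Real.differentiableAt_Gamma ?_).continuousAt
        intro m
        have hm : -(m:ℝ) ≤ 0 := neg_nonpos.mpr (Nat.cast_nonneg m)
        exact (lt_of_le_of_lt hm hn2).ne'
      exact hG.comp hadd
    have hc3 : ContinuousAt (fun s : ℝ => Real.Gamma (1 - s)) 0 := by
      have hsub : ContinuousAt (fun s : ℝ => 1 - s) 0 :=
        (continuous_const.sub continuous_id).continuousAt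
      have hG : ContinuousAt Real.Gamma ((fun s : ℝ => 1 - s) 0) := by
        simp only [sub_zero]
        refine (Real.differentiableAt_Gamma ?_).continuousAt
        intro m
        have hm : -(m:ℝ) ≤ 0 := neg_nonpos.mpr (Nat.cast_nonneg m)
        exact (lt_of_le_of_lt hm one_pos).ne'
      exact hG.comp hsub
    have hden : (fun s : ℝ => Real.Gamma ((n:ℝ)/2) * Real.Gamma (1 - s)) 0 ≠ 0 := by
      simp only [sub_zero, Real.Gamma_one]
      exact (by simpa using hGn.ne' : Real.Gamma ((n:ℝ)/2) * 1 ≠ 0)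
    have hcont : ContinuousAt (fun s : ℝ =>
        (2 : ℝ) ^ (2 * s) * Real.Gamma ((n : ℝ) / 2 + s) /
          (Real.Gamma ((n : ℝ) / 2) * Real.Gamma (1 - s))) 0 :=
      (hc1.mul hc2).div (continuousAt_const.mul hc3) hden
    have hT : Tendsto (fun s : ℝ =>
        (2 : ℝ) ^ (2 * s) * Real.Gamma ((n : ℝ) / 2 + s) /
          (Real.Gamma ((n : ℝ) / 2) * Real.Gamma (1 - s)))
        (nhdsWithin 0 (Set.Ioi (0:ℝ)))
        (nhds ((2 : ℝ) ^ (2 * (0:ℝ)) * Real.Gamma ((n : ℝ) / 2 + 0) /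
          (Real.Gamma ((n : ℝ) / 2) * Real.Gamma (1 - 0)))) :=
      hcont.tendsto.mono_left nhdsWithin_le_nhds
    convert hT using 2
    rw [mul_zero, Real.rpow_zero, add_zero, sub_zero, Real.Gamma_one, mul_one, one_mul,
      div_self hGn.ne']
end
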